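/- arXiv:1612.03736 — 3 statements merged into one kernel-verified Lean document; each statement's English description precedes it below -/
import Mathlib

section
/- Let G be a quasi-regularizable finite simple graph of order n ≥ 2 with independence number α. Then s_{⌈(n−1)/3⌉} ≥ s_{⌈(n−1)/3⌉ + 1} ≥ ⋯ ≥ s_α; that is, s_k ≥ s_{k+1} for every k with ⌈(n−1)/3⌉ ≤ k < α. -/
open Finset
open scoped Classical

variable {V : Type*}

/-- `S` is an independent set in `G`: its vertices are pairwise non-adjacent. -/
def IsIndepSet (G : SimpleGraph V) (S : Finset V) : Prop :=
  ∀ ⦃u⦄, u ∈ S → ∀ ⦃v⦄, v ∈ S → ¬ G.Adj u v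

/-- The neighborhood `N(S)`: all vertices having at least one neighbor in `S`. -/
noncomputable def neigh [Fintype V] (G : SimpleGraph V) (S : Finset V) : Finset V :=
  Finset.univ.filter fun v => ∃ u ∈ S, G.Adj u v

/-- The independence number `α(G)`: the maximum size of an independent set. -/
noncomputable def indepNum [Fintype V] (G : SimpleGraph V) : ℕ :=
  (Finset.univ.filter fun S : Finset V => IsIndepSet G S).sup Finset.card

/-- `s_k`: the number of independent sets of size `k` in `G`. -/
noncomputable def indepCount [Fintype V] (G : SimpleGraph V) (k : ℕ) : ℕ :=
  (Finset.univ.filter fun S : Finset V => IsIndepSet G S ∧ S.card = k).card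

/-- A maximal independent set (not properly contained in another independent set). -/
def IsMaximalIndepSet (G : SimpleGraph V) (S : Finset V) : Prop :=
  IsIndepSet G S ∧ ∀ T : Finset V, IsIndepSet G T → S ⊆ T → S = T

/-- `G` is well-covered: all maximal independent sets have the same cardinality. -/
def IsWellCovered (G : SimpleGraph V) : Prop :=
  ∀ S T : Finset V, IsMaximalIndepSet G S → IsMaximalIndepSet G T → S.card = T.card

/-- `G` is 1-well-covered: it is well-covered, has at least two vertices, and
deleting any vertex leaves a well-covered graph. -/
def IsOneWellCovered [Fintype V] (G : SimpleGraph V) : Prop :=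
  IsWellCovered G ∧ 2 ≤ Fintype.card V ∧
    ∀ v : V, IsWellCovered (G.induce ({v}ᶜ : Set V))

/-- The corona `H ∘ K₂`: for each vertex `v` of `H`, two new vertices
(`(v, false)` and `(v, true)`) adjacent to each other and to `v` are added. -/
def corona2 (H : SimpleGraph V) : SimpleGraph (V ⊕ V × Bool) :=
  SimpleGraph.fromRel fun x y =>
    match x, y with
    | Sum.inl u, Sum.inl v => H.Adj u v
    | Sum.inl u, Sum.inr (v, _) => u = v
    | Sum.inr (u, _), Sum.inr (v, _) => u = v
    | _, _ => False

/-! Double counting the pairs `B ⊂ A` of independent sets with `|B| = k`, `|A| = k + 1`: each `A`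
contains `k + 1` such `B`, and each `B` lies in at most `n - k - |N(B)| ≤ n - 2k` such `A`, since `A`
adds to `B` one vertex outside `B ∪ N(B)`. Hence `(k + 1) s_{k+1} ≤ (n - 2k) s_k`, and
`n - 2k ≤ k + 1` once `k ≥ ⌈(n - 1)/3⌉`. -/

def IsQuasiRegularizable [Fintype V] (G : SimpleGraph V) : Prop :=
  ∀ S : Finset V, IsIndepSet G S → S.card ≤ (neigh G S).card

namespace IsIndepSet

variable {G : SimpleGraph V} {A B : Finset V}

theorem mono (hA : IsIndepSet G A) (hBA : B ⊆ A) : IsIndepSet G B :=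
  fun _ hu _ hv => hA (hBA hu) (hBA hv)

theorem disjoint_neigh [Fintype V] (hB : IsIndepSet G B) : Disjoint B (neigh G B) := by
  refine Finset.disjoint_left.mpr fun v hvB hvN => ?_
  obtain ⟨-, u, hu, huv⟩ := Finset.mem_filter.mp hvN
  exact hB hu hvB huv

theorem card_filter_superset_le [Fintype V] (hB : IsIndepSet G B) :
    (univ.filter fun A : Finset V => IsIndepSet G A ∧ A.card = B.card + 1 ∧ B ⊆ A).card ≤
      Fintype.card V - B.card - (neigh G B).card := by
  have hsub : (univ.filter fun A : Finset V => IsIndepSet G A ∧ A.card = B.card + 1 ∧ B ⊆ A) ⊆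
      (univ \ (B ∪ neigh G B)).image (insert · B) := by
    intro A hA
    obtain ⟨-, hAi, hAc, hBA⟩ := Finset.mem_filter.mp hA
    obtain ⟨v, hvB, rfl⟩ : ∃ v ∉ B, insert v B = A := by
      obtain ⟨v, hv⟩ := Finset.card_eq_one.mp (by rw [Finset.card_sdiff_of_subset hBA]; omega)
      refine ⟨v, fun h => ?_, ?_⟩
      · simpa [h] using (Finset.ext_iff.mp hv v)
      · rw [← Finset.sdiff_union_of_subset hBA, hv]; rfl
    refine Finset.mem_image.mpr ⟨v, ?_, rfl⟩
    simp only [Finset.mem_sdiff, Finset.mem_univ, Finset.mem_union, true_and, not_or]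
    refine ⟨hvB, fun hvN => ?_⟩
    obtain ⟨-, u, hu, huv⟩ := Finset.mem_filter.mp hvN
    exact hAi (Finset.mem_insert_of_mem hu) (Finset.mem_insert_self v B) huv
  calc _ ≤ ((univ \ (B ∪ neigh G B)).image (insert · B)).card := Finset.card_le_card hsub
    _ ≤ (univ \ (B ∪ neigh G B)).card := Finset.card_image_le
    _ = Fintype.card V - B.card - (neigh G B).card := by
      rw [Finset.card_sdiff_of_subset (Finset.subset_univ _), Finset.card_univ,
        Finset.card_union_of_disjoint hB.disjoint_neigh, Nat.sub_sub]

theorem card_filter_subset_eq_choose [Fintype V] (hA : IsIndepSet G A) (k : ℕ) :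
    (univ.filter fun B : Finset V => IsIndepSet G B ∧ B.card = k ∧ B ⊆ A).card =
      A.card.choose k := by
  rw [← Finset.card_powersetCard]
  congr 1
  ext B
  simp only [Finset.mem_filter, Finset.mem_univ, true_and, Finset.mem_powersetCard]
  exact ⟨fun ⟨_, hk, hBA⟩ => ⟨hBA, hk⟩, fun ⟨hBA, hk⟩ => ⟨hA.mono hBA, hk, hBA⟩⟩

end IsIndepSet

theorem IsQuasiRegularizable.indepCount_succ_mul_le [Fintype V] {G : SimpleGraph V}
    (hG : IsQuasiRegularizable G) (k : ℕ) :
    indepCount G (k + 1) * (k + 1) ≤ indepCount G k * (Fintype.card V - 2 * k) := by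
  refine Finset.card_mul_le_card_mul (fun A B => B ⊆ A) (fun A hA => ?_) (fun B hB => ?_)
  · obtain ⟨-, hAi, hAc⟩ := Finset.mem_filter.mp hA
    have hsubsets := hAi.card_filter_subset_eq_choose k
    rw [hAc, Nat.choose_succ_self_right] at hsubsets
    rw [Finset.bipartiteAbove, Finset.filter_filter, ← hsubsets]
    simp only [and_assoc, le_refl]
  · obtain ⟨-, hBi, hBc⟩ := Finset.mem_filter.mp hB
    have hext := hBi.card_filter_superset_le
    rw [Finset.bipartiteBelow, Finset.filter_filter]
    simp only [and_assoc, hBc] at hext ⊢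
    have := hG B hBi
    omega

theorem stmt_3_general {V : Type*} [Fintype V] (G : SimpleGraph V) (n : ℕ)
    (hn : Fintype.card V = n) (alpha : ℕ)
    (hqr : ∀ S : Finset V, IsIndepSet G S → S.card ≤ (neigh G S).card) :
    ∀ k : ℕ, (n - 1 + 2) / 3 ≤ k → k < alpha →
      indepCount G (k + 1) ≤ indepCount G k := by
  intro k hk _
  refine Nat.le_of_mul_le_mul_right ?_ k.succ_pos
  calc indepCount G (k + 1) * (k + 1) ≤ indepCount G k * (n - 2 * k) :=
        hn ▸ IsQuasiRegularizable.indepCount_succ_mul_le hqr k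
    _ ≤ indepCount G k * (k + 1) := Nat.mul_le_mul_left _ (by omega)

/-- If `G` is a quasi-regularizable graph of order `n ≥ 2` with
independence number `α`, then `s_{⌈(n−1)/3⌉} ≥ s_{⌈(n−1)/3⌉+1} ≥ ⋯ ≥ s_α`. -/
theorem stmt_3 {V : Type*} [Fintype V] (G : SimpleGraph V) (n : ℕ)
    (hn : Fintype.card V = n) (hn2 : 2 ≤ n) (alpha : ℕ) (ha : alpha = indepNum G)
    (hqr : ∀ S : Finset V, IsIndepSet G S → S.card ≤ (neigh G S).card) :
    ∀ k : ℕ, (n - 1 + 2) / 3 ≤ k → k < alpha →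
      indepCount G (k + 1) ≤ indepCount G k :=
  stmt_3_general G n hn alpha hqr
end

section
/- Let G be a very well-covered finite simple graph of order n ≥ 2 with independence number α. Then s_0 ≤ s_1 ≤ ⋯ ≤ s_{⌈α/2⌉} and s_{⌈(2α−1)/3⌉} ≥ s_{⌈(2α−1)/3⌉+1} ≥ ⋯ ≥ s_α. -/
open Finset
open scoped Classical

variable {V : Type*}

/-!
Count the pairs `A ⊂ B` of independent sets with `#A = k`, `#B = k + 1`. Each `B` contains `k + 1`
such `A`; each `A` lies in one `B` per vertex outside `A ∪ N(A)`. Extending `A` to a maximal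
independent set, of size `α` by well-coveredness, gives at least `α - k` such vertices. In a
well-covered graph without isolated vertices every independent `A` satisfies `#A ≤ #N(A)`, which
gives at most `n - 2k`. Hence `(α - k) s_k ≤ (k + 1) s_{k+1} ≤ (n - 2k) s_k`, and with `n = 2α`
the two factors compare with `k + 1` on the stated ranges.
-/

section IndepSets

variable {G : SimpleGraph V} {A B Q S T X : Finset V}

lemma IsIndepSet.mono_s6 (hB : IsIndepSet G B) (h : A ⊆ B) : IsIndepSet G A :=
  fun _ hu _ hv => hB (h hu) (h hv)

lemma isIndepSet_empty : IsIndepSet G ∅ := by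
  simp [IsIndepSet]

variable [Fintype V]

lemma mem_neigh {v : V} : v ∈ neigh G A ↔ ∃ u ∈ A, G.Adj u v := by
  simp [neigh]

lemma neigh_mono (h : A ⊆ B) : neigh G A ⊆ neigh G B := by
  intro v hv
  obtain ⟨u, hu, huv⟩ := mem_neigh.mp hv
  exact mem_neigh.mpr ⟨u, h hu, huv⟩

lemma IsIndepSet.disjoint_neigh_s6 (hA : IsIndepSet G A) : Disjoint A (neigh G A) := by
  refine disjoint_left.mpr fun v hv hvN => ?_
  obtain ⟨u, hu, huv⟩ := mem_neigh.mp hvN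
  exact hA hu hv huv

lemma IsIndepSet.union (hA : IsIndepSet G A) (hB : IsIndepSet G B)
    (h : Disjoint B (neigh G A)) : IsIndepSet G (A ∪ B) := by
  intro u hu v hv huv
  rcases mem_union.mp hu with hu | hu <;> rcases mem_union.mp hv with hv | hv
  · exact hA hu hv huv
  · exact disjoint_left.mp h hv (mem_neigh.mpr ⟨u, hu, huv⟩)
  · exact disjoint_left.mp h hu (mem_neigh.mpr ⟨v, hv, huv.symm⟩)
  · exact hB hu hv huv

lemma isIndepSet_insert_iff {v : V} :
    IsIndepSet G (insert v A) ↔ IsIndepSet G A ∧ v ∉ neigh G A := by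
  simp only [IsIndepSet, mem_insert, mem_neigh]
  constructor
  · intro h
    exact ⟨fun u hu w hw => h (Or.inr hu) (Or.inr hw),
      fun ⟨u, hu, huv⟩ => h (Or.inr hu) (Or.inl rfl) huv⟩
  · rintro ⟨hA, hv⟩ u (rfl | hu) w (rfl | hw) huw
    · exact G.irrefl huw
    · exact hv ⟨w, hw, huw.symm⟩
    · exact hv ⟨u, hu, huw⟩
    · exact hA hu hw huw

lemma IsIndepSet.card_le_indepNum (hA : IsIndepSet G A) : #A ≤ indepNum G :=
  le_sup (f := card) (by simpa using hA)

lemma IsIndepSet.exists_dominating_superset (hA : IsIndepSet G A) (hAT : A ⊆ T) :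
    ∃ I, A ⊆ I ∧ I ⊆ T ∧ IsIndepSet G I ∧ T \ I ⊆ neigh G I := by
  obtain ⟨I, hI, hmax⟩ := exists_max_image
    {I : Finset V | A ⊆ I ∧ I ⊆ T ∧ IsIndepSet G I} card ⟨A, by simp [hA, hAT]⟩
  simp only [mem_filter, mem_univ, true_and] at hI hmax
  obtain ⟨hAI, hIT, hIind⟩ := hI
  refine ⟨I, hAI, hIT, hIind, fun t ht => ?_⟩
  obtain ⟨htT, htI⟩ := mem_sdiff.mp ht
  by_contra htN
  have := hmax (insert t I) ⟨hAI.trans (subset_insert _ _), insert_subset htT hIT,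
    isIndepSet_insert_iff.mpr ⟨hIind, htN⟩⟩
  rw [card_insert_of_notMem htI] at this
  omega

lemma IsIndepSet.exists_isMaximalIndepSet_superset (hA : IsIndepSet G A) :
    ∃ M, IsMaximalIndepSet G M ∧ A ⊆ M := by
  obtain ⟨M, hAM, -, hM, hdom⟩ := hA.exists_dominating_superset (subset_univ A)
  refine ⟨M, ⟨hM, fun T hT hMT => ?_⟩, hAM⟩
  refine hMT.antisymm fun v hvT => by_contra fun hvM => ?_
  obtain ⟨u, hu, huv⟩ := mem_neigh.mp (hdom (mem_sdiff.mpr ⟨mem_univ v, hvM⟩))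
  exact hT (hMT hu) hvT huv

lemma IsWellCovered.card_eq_indepNum (hwc : IsWellCovered G) {M : Finset V}
    (hM : IsMaximalIndepSet G M) : #M = indepNum G := by
  obtain ⟨S, hS, hSα⟩ := exists_mem_eq_sup {S : Finset V | IsIndepSet G S}
    ⟨∅, by simp [isIndepSet_empty]⟩ card
  obtain ⟨M₀, hM₀, hSM₀⟩ := (mem_filter.mp hS).2.exists_isMaximalIndepSet_superset
  have : #M₀ = indepNum G :=
    hM₀.1.card_le_indepNum.antisymm (indepNum G |>.le_of_eq hSα |>.trans (card_le_card hSM₀))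
  exact (hwc M M₀ hM hM₀).trans this

/-- `X ∪ (Q \ N(X))` is independent, so by well-coveredness it is no larger than `Q`. -/
lemma IsWellCovered.card_le_card_neigh_inter (hwc : IsWellCovered G)
    (hQ : IsMaximalIndepSet G Q) (hX : IsIndepSet G X) (hXQ : Disjoint X Q) :
    #X ≤ #(neigh G X ∩ Q) := by
  have hY : IsIndepSet G (X ∪ Q \ neigh G X) := hX.union (hQ.1.mono_s6 sdiff_subset) sdiff_disjoint
  have hle := hY.card_le_indepNum
  rw [← hwc.card_eq_indepNum hQ, card_union_of_disjoint (hXQ.mono_right sdiff_subset),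
    ← card_inter_add_card_sdiff Q (neigh G X), inter_comm] at hle
  omega

/-- Take `I` independent and dominating `N(S)`, and `Q ⊇ I` maximal independent. The part of `S`
adjacent to `I` lies outside `Q`, so `card_le_card_neigh_inter` bounds it by `#I`; the rest of `S`
has its neighbours in `N(S) \ I` and is handled by induction. -/
theorem IsWellCovered.card_le_card_neigh (hwc : IsWellCovered G) (hiso : ∀ v, ∃ w, G.Adj v w)
    (hS : IsIndepSet G S) : #S ≤ #(neigh G S) := by
  induction hm : #S using Nat.strong_induction_on generalizing S with
  | _ m ih =>
  subst hm
  obtain rfl | ⟨s, hs⟩ := S.eq_empty_or_nonempty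
  · simp
  obtain ⟨I, -, hIN, hI, hdom⟩ :=
    isIndepSet_empty.exists_dominating_superset (empty_subset (neigh G S))
  have hNI : ∀ v ∈ neigh G S, v ∉ I → v ∈ neigh G I :=
    fun v hv hvI => hdom (mem_sdiff.mpr ⟨hv, hvI⟩)
  set X := S ∩ neigh G I
  set S' := S \ neigh G I
  have hXS' : #X + #S' = #S := card_inter_add_card_sdiff S (neigh G I)
  obtain ⟨Q, hQ, hIQ⟩ :=
    (hI.union (hS.mono_s6 sdiff_subset) sdiff_disjoint).exists_isMaximalIndepSet_superset
  have hQN : Disjoint Q (neigh G I) :=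
    hQ.1.disjoint_neigh_s6.mono_right (neigh_mono (subset_union_left.trans hIQ))
  have hX_ne : X.Nonempty := by
    obtain ⟨w, hw⟩ := hiso s
    obtain ⟨i, hi⟩ : I.Nonempty := by
      rw [nonempty_iff_ne_empty]
      rintro rfl
      simpa [mem_neigh] using hNI w (mem_neigh.mpr ⟨s, hs, hw⟩) (notMem_empty w)
    obtain ⟨u, hu, hui⟩ := mem_neigh.mp (hIN hi)
    exact ⟨u, mem_inter.mpr ⟨hu, mem_neigh.mpr ⟨i, hi, hui.symm⟩⟩⟩
  have hX : #X ≤ #I := by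
    refine (hwc.card_le_card_neigh_inter hQ (hS.mono_s6 inter_subset_left)
      (disjoint_left.mpr fun x hx hxQ => disjoint_left.mp hQN hxQ (mem_inter.mp hx).2)).trans
      (card_le_card fun v hv => ?_)
    obtain ⟨hvX, hvQ⟩ := mem_inter.mp hv
    by_contra hvI
    exact disjoint_left.mp hQN hvQ (hNI v (neigh_mono inter_subset_left hvX) hvI)
  have hS' : #S' ≤ #(neigh G S) - #I := by
    have hsub : neigh G S' ⊆ neigh G S \ I := by
      intro v hv
      obtain ⟨u, hu, huv⟩ := mem_neigh.mp hv
      refine mem_sdiff.mpr ⟨mem_neigh.mpr ⟨u, (mem_sdiff.mp hu).1, huv⟩, fun hvI => ?_⟩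
      exact (mem_sdiff.mp hu).2 (mem_neigh.mpr ⟨v, hvI, huv.symm⟩)
    have hlt : #S' < #S := by
      have := hX_ne.card_pos
      omega
    calc #S' ≤ #(neigh G S') := ih _ hlt (hS.mono_s6 sdiff_subset) rfl
      _ ≤ #(neigh G S \ I) := card_le_card hsub
      _ = #(neigh G S) - #I := card_sdiff_of_subset hIN
  have := card_le_card hIN
  omega

end IndepSets

section Counting

variable [Fintype V] {G : SimpleGraph V} {A B : Finset V}

noncomputable def indepSetsOfCard (G : SimpleGraph V) (k : ℕ) : Finset (Finset V) :=
  {S | IsIndepSet G S ∧ #S = k}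

lemma mem_indepSetsOfCard {k : ℕ} : A ∈ indepSetsOfCard G k ↔ IsIndepSet G A ∧ #A = k := by
  simp [indepSetsOfCard]

noncomputable def extenders (G : SimpleGraph V) (A : Finset V) : Finset V :=
  {v | v ∉ A ∧ IsIndepSet G (insert v A)}

lemma card_bipartiteAbove_indepSetsOfCard {k : ℕ} (hA : A ∈ indepSetsOfCard G k) :
    #((indepSetsOfCard G (k + 1)).bipartiteAbove (· ⊆ ·) A) = #(extenders G A) := by
  have hA : IsIndepSet G A ∧ #A = k := mem_indepSetsOfCard.mp hA
  have himage : (indepSetsOfCard G (k + 1)).bipartiteAbove (· ⊆ ·) A =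
      (extenders G A).image (insert · A) := by
    ext B
    simp only [mem_bipartiteAbove, mem_indepSetsOfCard, extenders, mem_filter, mem_univ,
      true_and, mem_image]
    constructor
    · rintro ⟨⟨hB, hBk⟩, hAB⟩
      obtain ⟨v, hvA, rfl⟩ := exists_eq_insert_iff.mpr ⟨hAB, by omega⟩
      exact ⟨v, ⟨hvA, hB⟩, rfl⟩
    · rintro ⟨v, ⟨hvA, hv⟩, rfl⟩
      exact ⟨⟨hv, by rw [card_insert_of_notMem hvA, hA.2]⟩, subset_insert v A⟩
  rw [himage, card_image_of_injOn]
  intro v hv w _ hvw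
  exact (insert_inj (mem_filter.mp hv).2.1).mp hvw

lemma card_bipartiteBelow_indepSetsOfCard {k : ℕ} (hB : B ∈ indepSetsOfCard G (k + 1)) :
    #((indepSetsOfCard G k).bipartiteBelow (· ⊆ ·) B) = k + 1 := by
  have hB : IsIndepSet G B ∧ #B = k + 1 := mem_indepSetsOfCard.mp hB
  have : (indepSetsOfCard G k).bipartiteBelow (· ⊆ ·) B = B.powersetCard k := by
    ext A
    simp only [mem_bipartiteBelow, mem_indepSetsOfCard, mem_powersetCard]
    exact ⟨fun ⟨⟨_, hk⟩, hAB⟩ => ⟨hAB, hk⟩, fun ⟨hAB, hk⟩ => ⟨⟨hB.1.mono_s6 hAB, hk⟩, hAB⟩⟩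
  rw [this, card_powersetCard, hB.2, Nat.choose_succ_self_right]

lemma IsWellCovered.indepNum_sub_card_le_card_extenders (hwc : IsWellCovered G)
    (hA : IsIndepSet G A) : indepNum G - #A ≤ #(extenders G A) := by
  obtain ⟨M, hM, hAM⟩ := hA.exists_isMaximalIndepSet_superset
  calc indepNum G - #A = #(M \ A) := by
        rw [card_sdiff_of_subset hAM, hwc.card_eq_indepNum hM]
    _ ≤ #(extenders G A) := card_le_card fun v hv => by
      obtain ⟨hvM, hvA⟩ := mem_sdiff.mp hv
      simpa [extenders, hvA] using hM.1.mono_s6 (insert_subset hvM hAM)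

lemma IsWellCovered.card_extenders_le (hwc : IsWellCovered G) (hiso : ∀ v, ∃ w, G.Adj v w)
    (hA : IsIndepSet G A) : #(extenders G A) ≤ Fintype.card V - 2 * #A := by
  have hsub : extenders G A ⊆ (A ∪ neigh G A)ᶜ := by
    intro v hv
    simp only [extenders, mem_filter, mem_univ, true_and, isIndepSet_insert_iff] at hv
    simp [hv.1, hv.2.2]
  have hcard := card_le_card hsub
  rw [card_compl, card_union_of_disjoint hA.disjoint_neigh_s6] at hcard
  have := hwc.card_le_card_neigh hiso hA
  omega

theorem IsWellCovered.indepCount_mul_le (hwc : IsWellCovered G) (k : ℕ) :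
    indepCount G k * (indepNum G - k) ≤ indepCount G (k + 1) * (k + 1) :=
  card_mul_le_card_mul (s := indepSetsOfCard G k) (t := indepSetsOfCard G (k + 1))
    (· ⊆ ·)
    (fun A hA => by
      rw [card_bipartiteAbove_indepSetsOfCard hA]
      have hA : IsIndepSet G A ∧ #A = k := mem_indepSetsOfCard.mp hA
      exact hA.2 ▸ hwc.indepNum_sub_card_le_card_extenders hA.1)
    (fun _ hB => (card_bipartiteBelow_indepSetsOfCard hB).le)

theorem IsWellCovered.indepCount_succ_mul_le (hwc : IsWellCovered G)
    (hiso : ∀ v, ∃ w, G.Adj v w) (k : ℕ) :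
    indepCount G (k + 1) * (k + 1) ≤ indepCount G k * (Fintype.card V - 2 * k) :=
  card_mul_le_card_mul' (s := indepSetsOfCard G k) (t := indepSetsOfCard G (k + 1))
    (· ⊆ ·)
    (fun _ hB => (card_bipartiteBelow_indepSetsOfCard hB).ge)
    (fun A hA => by
      rw [card_bipartiteAbove_indepSetsOfCard hA]
      have hA : IsIndepSet G A ∧ #A = k := mem_indepSetsOfCard.mp hA
      exact hA.2 ▸ hwc.card_extenders_le hiso hA.1)

end Counting

theorem stmt_6_general {V : Type*} [Fintype V] (G : SimpleGraph V) (n : ℕ)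
    (hn : Fintype.card V = n) (alpha : ℕ) (ha : alpha = indepNum G)
    (hwc : IsWellCovered G) (hiso : ∀ v : V, ∃ w : V, G.Adj v w)
    (hvwc : n = 2 * alpha) :
    (∀ k : ℕ, k < (alpha + 1) / 2 → indepCount G k ≤ indepCount G (k + 1)) ∧
    (∀ k : ℕ, (2 * alpha - 1 + 2) / 3 ≤ k → k < alpha →
      indepCount G (k + 1) ≤ indepCount G k) := by
  subst ha
  constructor
  · intro k hk
    refine Nat.le_of_mul_le_mul_right ?_ k.succ_pos
    calc indepCount G k * (k + 1) ≤ indepCount G k * (indepNum G - k) := by gcongr; omega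
      _ ≤ indepCount G (k + 1) * (k + 1) := hwc.indepCount_mul_le k
  · intro k hk hkα
    refine Nat.le_of_mul_le_mul_right ?_ k.succ_pos
    calc indepCount G (k + 1) * (k + 1) ≤ indepCount G k * (n - 2 * k) :=
          hn ▸ hwc.indepCount_succ_mul_le hiso k
      _ ≤ indepCount G k * (k + 1) := by gcongr; omega

/-- If `G` is a very well-covered graph of order `n ≥ 2` with
independence number `α`, then `s_0 ≤ s_1 ≤ ⋯ ≤ s_{⌈α/2⌉}` and
`s_{⌈(2α−1)/3⌉} ≥ s_{⌈(2α−1)/3⌉+1} ≥ ⋯ ≥ s_α`. -/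
theorem stmt_6 {V : Type*} [Fintype V] (G : SimpleGraph V) (n : ℕ)
    (hn : Fintype.card V = n) (hn2 : 2 ≤ n) (alpha : ℕ) (ha : alpha = indepNum G)
    (hwc : IsWellCovered G) (hiso : ∀ v : V, ∃ w : V, G.Adj v w)
    (hvwc : n = 2 * alpha) :
    (∀ k : ℕ, k < (alpha + 1) / 2 → indepCount G k ≤ indepCount G (k + 1)) ∧
    (∀ k : ℕ, (2 * alpha - 1 + 2) / 3 ≤ k → k < alpha →
      indepCount G (k + 1) ≤ indepCount G k) :=
  stmt_6_general G n hn alpha ha hwc hiso hvwc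
end

section
/- Let H be a connected finite simple graph and let G = H ∘ K₂ be the corona of H with K₂, with α = α(G). Then for every integer k with 1 ≤ k < α, we have 2(α − k)·s_k ≤ (k+1)·s_{k+1} ≤ 3(α − k)·s_k. -/
open Finset
open scoped Classical

variable {V : Type*}

/-!
The vertex sets `{v, (v, false), (v, true)}` of `H ∘ K₂` are triangles partitioning the vertices,
so an independent set `S` meets each of them at most once and `α = |V|`. A vertex outside `S`
extends `S` to a larger independent set only if its triangle misses `S`, and both pendant vertices
`(v, false)`, `(v, true)` of a missed triangle always do: hence `S` has between `2(α - |S|)` and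
`3(α - |S|)` one-vertex extensions. Double counting the pairs `S ⊂ T` of independent sets with
`|S| = k`, `|T| = k + 1` gives `(k + 1) s_{k+1} = ∑_{|S| = k} #extensions(S)`.
-/

noncomputable def extensions [Fintype V] [DecidableEq V] (G : SimpleGraph V) (S : Finset V) :
    Finset V :=
  univ.filter fun w => w ∉ S ∧ IsIndepSet G (insert w S)

lemma IsIndepSet.mono_s13 {G : SimpleGraph V} {S T : Finset V} (hT : IsIndepSet G T) (hST : S ⊆ T) :
    IsIndepSet G S :=
  fun _ hu _ hv => hT (hST hu) (hST hv)

lemma IsIndepSet.insert [DecidableEq V] {G : SimpleGraph V} {S : Finset V} {w : V}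
    (hS : IsIndepSet G S) (hw : ∀ s ∈ S, ¬ G.Adj w s) : IsIndepSet G (insert w S) := by
  intro u hu v hv huv
  rw [mem_insert] at hu hv
  rcases hu with rfl | hu <;> rcases hv with rfl | hv
  · exact G.irrefl huv
  · exact hw v hv huv
  · exact hw u hu huv.symm
  · exact hS hu hv huv

section Counting

variable [Fintype V] [DecidableEq V] (G : SimpleGraph V)

lemma card_extensions (S : Finset V) :
    #(extensions G S) =
      #((univ.filter fun T => IsIndepSet G T ∧ T.card = #S + 1).bipartiteAbove (· ⊆ ·) S) := by
  refine card_bij (fun w _ => insert w S) ?_ ?_ ?_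
  · intro w hw
    obtain ⟨hwS, hind⟩ := (mem_filter.1 hw).2
    simp [hind, card_insert_of_notMem hwS, subset_insert]
  · intro w hw w' _ h
    have hmem : w ∈ insert w' S := h ▸ mem_insert_self w S
    exact (mem_insert.1 hmem).resolve_right (mem_filter.1 hw).2.1
  · intro T hT
    simp only [mem_bipartiteAbove, mem_filter, mem_univ, true_and] at hT
    obtain ⟨⟨hind, hcard⟩, hST⟩ := hT
    obtain ⟨w, hwS, rfl⟩ := exists_eq_insert_iff.2 ⟨hST, hcard.symm⟩
    exact ⟨w, mem_filter.2 ⟨mem_univ _, hwS, hind⟩, rfl⟩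

lemma succ_mul_indepCount_succ (k : ℕ) :
    (k + 1) * indepCount G (k + 1) =
      ∑ S ∈ univ.filter (fun S => IsIndepSet G S ∧ S.card = k), #(extensions G S) := by
  have below (T : Finset V) (hT : T ∈ univ.filter fun T => IsIndepSet G T ∧ T.card = k + 1) :
      (univ.filter fun S => IsIndepSet G S ∧ S.card = k).bipartiteBelow (· ⊆ ·) T =
        T.powersetCard k := by
    obtain ⟨hind, -⟩ := (mem_filter.1 hT).2
    ext S
    simp only [mem_bipartiteBelow, mem_filter, mem_univ, true_and, mem_powersetCard]
    exact ⟨fun ⟨⟨_, hS⟩, hST⟩ => ⟨hST, hS⟩, fun ⟨hST, hS⟩ => ⟨⟨hind.mono_s13 hST, hS⟩, hST⟩⟩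
  rw [sum_congr rfl fun S hS => (mem_filter.1 hS).2.2 ▸ card_extensions G S,
    sum_card_bipartiteAbove_eq_sum_card_bipartiteBelow,
    sum_congr rfl fun T hT => by rw [below T hT, card_powersetCard, (mem_filter.1 hT).2.2]]
  simp [indepCount, mul_comm]

lemma mul_indepCount_le_succ_mul_indepCount_succ {k n : ℕ}
    (h : ∀ S, IsIndepSet G S → #S = k → n ≤ #(extensions G S)) :
    n * indepCount G k ≤ (k + 1) * indepCount G (k + 1) := by
  rw [succ_mul_indepCount_succ, indepCount, mul_comm, ← smul_eq_mul]
  exact card_nsmul_le_sum _ _ _ fun S hS => h S (mem_filter.1 hS).2.1 (mem_filter.1 hS).2.2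

lemma succ_mul_indepCount_succ_le_mul_indepCount {k n : ℕ}
    (h : ∀ S, IsIndepSet G S → #S = k → #(extensions G S) ≤ n) :
    (k + 1) * indepCount G (k + 1) ≤ n * indepCount G k := by
  rw [succ_mul_indepCount_succ, indepCount, mul_comm, ← smul_eq_mul]
  exact sum_le_card_nsmul _ _ _ fun S hS => h S (mem_filter.1 hS).2.1 (mem_filter.1 hS).2.2

end Counting

section Corona

def coronaBase : V ⊕ V × Bool → V :=
  Sum.elim id Prod.fst

@[simp]
lemma coronaBase_inl (v : V) : coronaBase (.inl v : V ⊕ V × Bool) = v := rfl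

@[simp]
lemma coronaBase_inr (v : V) (b : Bool) : coronaBase (.inr (v, b) : V ⊕ V × Bool) = v := rfl

variable {H : SimpleGraph V}

lemma corona2_adj_iff {x y : V ⊕ V × Bool} :
    (corona2 H).Adj x y ↔
      x ≠ y ∧ (coronaBase x = coronaBase y ∨ ∃ u v, x = .inl u ∧ y = .inl v ∧ H.Adj u v) := by
  rcases x with u | ⟨u, b⟩ <;> rcases y with v | ⟨v, c⟩ <;>
    simp [corona2, H.adj_comm v u, eq_comm]
  tauto

lemma corona2_adj_of_coronaBase_eq {x y : V ⊕ V × Bool} (hxy : x ≠ y)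
    (h : coronaBase x = coronaBase y) : (corona2 H).Adj x y :=
  corona2_adj_iff.2 ⟨hxy, .inl h⟩

lemma coronaBase_eq_of_corona2_adj_inr {v : V} {b : Bool} {y : V ⊕ V × Bool}
    (h : (corona2 H).Adj (.inr (v, b)) y) : coronaBase y = v := by
  obtain ⟨-, h | ⟨_, _, h, -⟩⟩ := corona2_adj_iff.1 h
  · exact h.symm
  · cases h

lemma card_filter_coronaBase_eq_le (s : Finset (V ⊕ V × Bool)) (v : V) :
    #{a ∈ s | coronaBase a = v} ≤ 3 := by
  refine (card_le_card fun a ha => ?_).trans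
    (card_le_three (a := .inl v) (b := .inr (v, false)) (c := .inr (v, true)))
  obtain ⟨-, rfl⟩ := mem_filter.1 ha
  rcases a with u | ⟨u, _ | _⟩ <;> simp

variable {S : Finset (V ⊕ V × Bool)}

lemma IsIndepSet.card_image_coronaBase (hS : IsIndepSet (corona2 H) S) :
    #(S.image coronaBase) = #S :=
  card_image_of_injOn fun _ hx _ hy hxy =>
    by_contra fun hne => hS hx hy (corona2_adj_of_coronaBase_eq hne hxy)

variable [Fintype V]

lemma coronaBase_notMem_image_of_mem_extensions {w : V ⊕ V × Bool}
    (hw : w ∈ extensions (corona2 H) S) : coronaBase w ∉ S.image coronaBase := by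
  obtain ⟨hwS, hind⟩ := (mem_filter.1 hw).2
  intro hmem
  obtain ⟨s, hs, hsw⟩ := mem_image.1 hmem
  exact hind (mem_insert_self w S) (mem_insert_of_mem hs)
    (corona2_adj_of_coronaBase_eq (fun h => hwS (h ▸ hs)) hsw.symm)

lemma inr_mem_extensions_corona2 (hS : IsIndepSet (corona2 H) S) {v : V}
    (hv : v ∉ S.image coronaBase) (b : Bool) : .inr (v, b) ∈ extensions (corona2 H) S := by
  have hnadj (s) (hs : s ∈ S) : ¬ (corona2 H).Adj (.inr (v, b)) s := fun h =>
    hv (mem_image.2 ⟨s, hs, coronaBase_eq_of_corona2_adj_inr h⟩)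
  refine mem_filter.2 ⟨mem_univ _, fun hmem => hv ?_, hS.insert hnadj⟩
  exact mem_image.2 ⟨_, hmem, rfl⟩

lemma indepNum_corona2 : indepNum (corona2 H) = Fintype.card V := by
  refine le_antisymm (Finset.sup_le fun S hS => ?_) ?_
  · rw [← (mem_filter.1 hS).2.card_image_coronaBase]
    exact card_le_univ _
  · let T : Finset (V ⊕ V × Bool) := univ.image fun v => .inr (v, false)
    have hT : IsIndepSet (corona2 H) T := by
      intro x hx y hy h
      obtain ⟨u, -, rfl⟩ := mem_image.1 hx
      obtain ⟨v, -, rfl⟩ := mem_image.1 hy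
      obtain rfl : v = u := coronaBase_eq_of_corona2_adj_inr h
      exact (corona2 H).irrefl h
    calc Fintype.card V = #T := by
          rw [card_image_of_injective _ fun u v h => by simpa using h, card_univ]
      _ ≤ indepNum (corona2 H) := le_sup (f := card) (mem_filter.2 ⟨mem_univ _, hT⟩)

lemma two_mul_le_card_extensions_corona2 (hS : IsIndepSet (corona2 H) S) :
    2 * (Fintype.card V - #S) ≤ #(extensions (corona2 H) S) :=
  calc 2 * (Fintype.card V - #S) = #((S.image coronaBase)ᶜ ×ˢ (univ : Finset Bool)) := by
        rw [card_product, card_compl, hS.card_image_coronaBase, card_univ, Fintype.card_bool,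
          mul_comm]
    _ ≤ #(extensions (corona2 H) S) :=
        card_le_card_of_injOn Sum.inr
          (fun p hp => inr_mem_extensions_corona2 hS (mem_compl.1 (mem_product.1 hp).1) p.2)
          Sum.inr_injective.injOn

lemma card_extensions_corona2_le (hS : IsIndepSet (corona2 H) S) :
    #(extensions (corona2 H) S) ≤ 3 * (Fintype.card V - #S) :=
  calc #(extensions (corona2 H) S) ≤ 3 * #(S.image coronaBase)ᶜ :=
        card_le_mul_card_image_of_maps_to
          (fun _ hw => mem_compl.2 (coronaBase_notMem_image_of_mem_extensions hw)) 3
          fun v _ => card_filter_coronaBase_eq_le _ v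
    _ = 3 * (Fintype.card V - #S) := by rw [card_compl, hS.card_image_coronaBase]

end Corona

theorem stmt_13_general {V : Type*} [Fintype V] (H : SimpleGraph V)
    (G : SimpleGraph (V ⊕ V × Bool)) (hG : G = corona2 H)
    (alpha : ℕ) (ha : alpha = indepNum G)
    (k : ℕ) (hk2 : k < alpha) :
    2 * ((alpha : ℤ) - k) * indepCount G k ≤ ((k : ℤ) + 1) * indepCount G (k + 1) ∧
    ((k : ℤ) + 1) * indepCount G (k + 1) ≤ 3 * ((alpha : ℤ) - k) * indepCount G k := by
  subst hG ha
  rw [indepNum_corona2] at hk2 ⊢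
  have hsub : (Fintype.card V : ℤ) - k = (Fintype.card V - k : ℕ) := by omega
  rw [hsub]
  constructor
  · exact_mod_cast mul_indepCount_le_succ_mul_indepCount_succ _ fun S hS hcard =>
      hcard ▸ two_mul_le_card_extensions_corona2 hS
  · exact_mod_cast succ_mul_indepCount_succ_le_mul_indepCount _ fun S hS hcard =>
      hcard ▸ card_extensions_corona2_le hS

/-- If `H` is a connected graph and `G = H ∘ K₂` with `α = α(G)`,
then `2(α − k)·s_k ≤ (k+1)·s_{k+1} ≤ 3(α − k)·s_k` for all `1 ≤ k < α`. -/
theorem stmt_13 {V : Type*} [Fintype V] (H : SimpleGraph V) (hconn : H.Connected)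
    (G : SimpleGraph (V ⊕ V × Bool)) (hG : G = corona2 H)
    (alpha : ℕ) (ha : alpha = indepNum G)
    (k : ℕ) (hk1 : 1 ≤ k) (hk2 : k < alpha) :
    2 * ((alpha : ℤ) - k) * indepCount G k ≤ ((k : ℤ) + 1) * indepCount G (k + 1) ∧
    ((k : ℤ) + 1) * indepCount G (k + 1) ≤ 3 * ((alpha : ℤ) - k) * indepCount G k :=
  stmt_13_general H G hG alpha ha k hk2
end
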